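/- arXiv:1611.04155 — 3 statements merged into one kernel-verified Lean document; each statement's English description precedes it below -/
import Mathlib

section
/- An element b^x a^y of ZM(m,n,r) centralizes the subgroup ⟨a^{m₁}, b^{n₁}⟩ if and only if ord_{m/m₁}(r) divides x and m/gcd(m, r^{n₁}−1) divides y. -/
/-!
Since `a ^ y` commutes with `a ^ m₁` and `b ^ x` with `b ^ n₁`, the element `b ^ x * a ^ y`
centralizes `⟨a ^ m₁, b ^ n₁⟩` iff `b ^ x` commutes with `a ^ m₁` and `a ^ y` with `b ^ n₁`.
Conjugation by `b ^ j` raises `a` to the power `r ^ j`, so these two conditions become the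
congruences `m₁ * r ^ x ≡ m₁` and `y * r ^ n₁ ≡ y` modulo `m = orderOf a`.
-/

/-- `ordMod m r` is the multiplicative order of `r` modulo `m`. -/
noncomputable def ordMod (m r : ℕ) : ℕ := orderOf (r : ZMod m)

theorem ordMod_dvd_iff {m r x : ℕ} : ordMod m r ∣ x ↔ r ^ x ≡ 1 [MOD m] := by
  rw [ordMod, orderOf_dvd_iff_pow_eq_one, ← Nat.cast_pow, ← Nat.cast_one,
    ZMod.natCast_eq_natCast_iff]

theorem Nat.ModEq.mul_left_cancel_iff_of_dvd {m c s t : ℕ} (hm : 0 < m) (hc : c ∣ m) :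
    c * s ≡ c * t [MOD m] ↔ s ≡ t [MOD m / c] := by
  obtain ⟨k, rfl⟩ := hc
  rw [Nat.mul_div_cancel_left k (Nat.pos_of_mul_pos_right hm)]
  exact Nat.ModEq.mul_left_cancel_iff' (Nat.pos_of_mul_pos_right hm).ne'

theorem Nat.div_gcd_dvd_iff_dvd_mul {m d y : ℕ} (hm : 0 < m) :
    m / m.gcd d ∣ y ↔ m ∣ y * d := by
  refine ⟨fun ⟨t, ht⟩ => ⟨t * (d / m.gcd d), ?_⟩, fun h => ?_⟩
  · rw [ht, mul_right_comm, Nat.div_mul_right_comm (Nat.gcd_dvd_left m d),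
      Nat.mul_div_assoc m (Nat.gcd_dvd_right m d)]
    ring
  · simpa [Nat.modEq_zero_iff_dvd] using
      Nat.ModEq.cancel_right_div_gcd hm (c := d) (a := y) (b := 0)
        (by simpa [Nat.modEq_zero_iff_dvd] using h)

theorem Nat.mul_pow_modEq_self_iff {m r k y : ℕ} (hm : 0 < m) (hr : 0 < r) :
    y * r ^ k ≡ y [MOD m] ↔ m / m.gcd (r ^ k - 1) ∣ y := by
  rw [Nat.div_gcd_dvd_iff_dvd_mul hm, Nat.mul_sub_one, Nat.ModEq.comm,
    Nat.modEq_iff_dvd' (Nat.le_mul_of_pos_right y (pow_pos hr k))]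

section Group

variable {G : Type*} [Group G]

theorem Subgroup.mem_centralizer_closure_pair_iff {u v g : G} :
    g ∈ centralizer ((closure {u, v} : Subgroup G) : Set G) ↔ Commute u g ∧ Commute v g := by
  simp [centralizer_closure, mem_centralizer_iff, commute_iff_eq]

theorem Commute.mul_right_iff_of_commute_right {u g h : G} (hh : Commute u h) :
    Commute u (g * h) ↔ Commute u g :=
  ⟨fun hgh => by simpa using hgh.mul_right hh.inv_right, fun hg => hg.mul_right hh⟩

theorem Commute.mul_right_iff_of_commute_left {u g h : G} (hg : Commute u g) :
    Commute u (g * h) ↔ Commute u h :=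
  ⟨fun hgh => by simpa using hg.inv_right.mul_right hgh, fun hh => hg.mul_right hh⟩

variable {a b : G} {r : ℕ}

theorem inv_pow_mul_pow_mul_pow_of_inv_mul_mul_eq_pow (hrel : b⁻¹ * a * b = a ^ r) (k j : ℕ) :
    (b ^ j)⁻¹ * a ^ k * b ^ j = a ^ (k * r ^ j) := by
  induction j with
  | zero => simp
  | succ j ih =>
    calc (b ^ (j + 1))⁻¹ * a ^ k * b ^ (j + 1) = b⁻¹ * ((b ^ j)⁻¹ * a ^ k * b ^ j) * b := by
          group
      _ = (b⁻¹ * a * b) ^ (k * r ^ j) := by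
          rw [ih]; simpa using (conj_pow (a := b⁻¹) (b := a)).symm
      _ = a ^ (k * r ^ (j + 1)) := by rw [hrel, ← pow_mul, pow_succ]; ring_nf

theorem commute_pow_pow_iff_of_inv_mul_mul_eq_pow (hrel : b⁻¹ * a * b = a ^ r) (k j : ℕ) :
    Commute (a ^ k) (b ^ j) ↔ a ^ (k * r ^ j) = a ^ k := by
  rw [← inv_pow_mul_pow_mul_pow_of_inv_mul_mul_eq_pow hrel, commute_iff_eq, mul_assoc,
    inv_mul_eq_iff_eq_mul, eq_comm]

end Group

theorem stmt_9_general {G : Type*} [Group G]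
    (m r : ℕ) (hm : 0 < m)
    (a b : G) (ha : orderOf a = m)
    (hrel : b⁻¹ * a * b = a ^ r)
    (m₁ n₁ : ℕ) (hm₁ : m₁ ∣ m)
    (x y : ℕ) :
    b ^ x * a ^ y ∈
        Subgroup.centralizer ((Subgroup.closure {a ^ m₁, b ^ n₁} : Subgroup G) : Set G) ↔
      ordMod (m / m₁) r ∣ x ∧ m / Nat.gcd m (r ^ n₁ - 1) ∣ y := by
  rw [Subgroup.mem_centralizer_closure_pair_iff,
    Commute.mul_right_iff_of_commute_right ((Commute.refl a).pow_pow _ _),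
    Commute.mul_right_iff_of_commute_left ((Commute.refl b).pow_pow _ _),
    Commute.symm_iff (a := b ^ n₁),
    commute_pow_pow_iff_of_inv_mul_mul_eq_pow hrel, commute_pow_pow_iff_of_inv_mul_mul_eq_pow hrel,
    pow_eq_pow_iff_modEq, pow_eq_pow_iff_modEq, ha, ordMod_dvd_iff,
    ← Nat.ModEq.mul_left_cancel_iff_of_dvd hm hm₁, mul_one]
  refine and_congr Iff.rfl ?_
  -- `r ^ n₁ - 1` truncates only when `r = 0`, and then the relation forces `a = 1`.
  rcases Nat.eq_zero_or_pos r with rfl | hr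
  · obtain rfl : m = 1 := by
      rw [← ha, orderOf_eq_one_iff]
      simpa [mul_assoc, inv_mul_eq_one] using hrel
    simp [Nat.modEq_one]
  · exact Nat.mul_pow_modEq_self_iff hm hr

/-- `b^x a^y` centralizes `⟨a^{m₁}, b^{n₁}⟩` iff `ord_{m/m₁}(r) ∣ x` and
`m / gcd(m, r^{n₁}-1) ∣ y`. -/
theorem stmt_9 {G : Type*} [Group G] [Finite G]
    (m n r : ℕ) (hm : 0 < m) (hn : 0 < n)
    (hgcd1 : Nat.gcd m n = 1) (hgcd2 : Nat.gcd m (r - 1) = 1)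
    (hrn : r ^ n % m = 1 % m)
    (a b : G) (ha : orderOf a = m) (hb : orderOf b = n)
    (hrel : b⁻¹ * a * b = a ^ r)
    (hgen : Subgroup.closure {a, b} = ⊤)
    (hcard : Nat.card G = m * n)
    (m₁ n₁ : ℕ) (hm₁ : m₁ ∣ m) (hn₁ : n₁ ∣ n)
    (x y : ℕ) (hx : x < n) (hy : y < m) :
    b ^ x * a ^ y ∈
        Subgroup.centralizer ((Subgroup.closure {a ^ m₁, b ^ n₁} : Subgroup G) : Set G) ↔
      ordMod (m / m₁) r ∣ x ∧ m / Nat.gcd m (r ^ n₁ - 1) ∣ y :=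
  stmt_9_general m r hm a b ha hrel m₁ n₁ hm₁ x y
end

section
/- The Chermak-Delgado lattice of ZM(m,n,r) is the single subgroup ⟨a, b^d⟩, where d = ord_m(r); i.e. CD(ZM(m,n,r)) = {⟨a, b^d⟩}. -/
/-- The Chermak–Delgado measure of a subgroup: `|H| * |C_G(H)|`. -/
noncomputable def chermakDelgadoMeasure {G : Type*} [Group G] (H : Subgroup G) : ℕ :=
  Nat.card H * Nat.card (Subgroup.centralizer (H : Set G))

namespace ZMod

variable {m k : ℕ} [NeZero m] (hk : k ∣ m)

theorem card_ker_castHom : Nat.card (castHom hk (ZMod k)).toAddMonoidHom.ker = m / k := by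
  have hk0 : k ≠ 0 := fun h => NeZero.ne m (Nat.eq_zero_of_zero_dvd (h ▸ hk))
  have := (castHom hk (ZMod k)).toAddMonoidHom.ker.card_mul_index
  rw [AddSubgroup.index_ker, AddMonoidHom.range_eq_top.mpr (castHom_surjective hk),
    AddSubgroup.card_top, Nat.card_zmod, Nat.card_zmod] at this
  exact Nat.eq_div_of_mul_eq_left hk0 this

theorem card_ker_unitsMap_le : Nat.card (unitsMap hk).ker ≤ m / k := by
  rw [← card_ker_castHom hk]
  refine Nat.card_le_card_of_injective (fun v => ⟨(v : (ZMod m)ˣ) - 1, ?_⟩) fun v w h => ?_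
  · have hv : unitsMap hk v = 1 := v.2
    change castHom hk (ZMod k) ((v : (ZMod m)ˣ) - 1) = 0
    rw [map_sub, map_one, sub_eq_zero]
    exact congrArg Units.val hv
  · exact Subtype.ext (Units.ext (sub_left_injective (congrArg Subtype.val h)))

/-- `x ^ orderOf (castHom x)` has order `orderOf x / orderOf (castHom x)` and lies in the kernel of
reduction modulo `k`. -/
theorem orderOf_div_orderOf_castHom_le {x : ZMod m} (hx : IsUnit x) :
    orderOf x / orderOf (castHom hk (ZMod k) x) ≤ m / k := by
  obtain ⟨u, rfl⟩ := hx
  have ht : orderOf (castHom hk (ZMod k) u) = orderOf (unitsMap hk u) := by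
    rw [← orderOf_units]; rfl
  rw [orderOf_units, ht, ← orderOf_pow_of_dvd (orderOf_pos _).ne' (orderOf_map_dvd _ _),
    ← Nat.card_zpowers]
  refine le_trans (Subgroup.card_le_of_le ?_) (card_ker_unitsMap_le hk)
  rw [Subgroup.zpowers_le, MonoidHom.mem_ker, map_pow, pow_orderOf_eq_one]

end ZMod

theorem ordMod_pos {m r : ℕ} (hr : IsUnit (r : ZMod m)) : 0 < ordMod m r :=
  orderOf_pos_iff.mpr hr.isOfFinOrder

theorem ordMod_dvd_ordMod {m k : ℕ} (hk : k ∣ m) (r : ℕ) : ordMod k r ∣ ordMod m r := by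
  have := orderOf_map_dvd (ZMod.castHom hk (ZMod k) : ZMod m →* ZMod k) (r : ZMod m)
  rwa [MonoidHom.coe_coe, map_natCast] at this

section ordMod

variable {m k r : ℕ} [NeZero m]

theorem ordMod_div_ordMod_le (hk : k ∣ m) (hr : IsUnit (r : ZMod m)) :
    ordMod m r / ordMod k r ≤ m / k := by
  simpa only [ordMod, map_natCast] using ZMod.orderOf_div_orderOf_castHom_le hk hr

theorem mul_ordMod_le_mul_ordMod (hk : k ∣ m) (hr : IsUnit (r : ZMod m)) :
    k * ordMod m r ≤ m * ordMod k r :=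
  calc k * ordMod m r = k * ordMod k r * (ordMod m r / ordMod k r) := by
        rw [mul_assoc, Nat.mul_div_cancel' (ordMod_dvd_ordMod hk r)]
    _ ≤ k * ordMod k r * (m / k) := Nat.mul_le_mul_left _ (ordMod_div_ordMod_le hk hr)
    _ = m * ordMod k r := by rw [mul_comm k, mul_assoc, Nat.mul_div_cancel' hk, mul_comm]

/-- The ratio `ordMod m r / ordMod k r` is coprime to `m`, so it can only equal the divisor `m / k`
of `m` when `m / k = 1`. -/
theorem eq_of_mul_ordMod_eq_mul_ordMod (hk : k ∣ m) (hr : IsUnit (r : ZMod m))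
    (hcop : (ordMod m r).Coprime m) (h : k * ordMod m r = m * ordMod k r) : k = m := by
  have hk0 : 0 < k := Nat.pos_of_dvd_of_pos hk (Nat.pos_of_ne_zero (NeZero.ne m))
  have ht0 : 0 < ordMod k r := Nat.pos_of_dvd_of_pos (ordMod_dvd_ordMod hk r) (ordMod_pos hr)
  have hratio : ordMod m r / ordMod k r = m / k := by
    apply Nat.eq_of_mul_eq_mul_left (Nat.mul_pos hk0 ht0)
    rw [mul_assoc, Nat.mul_div_cancel' (ordMod_dvd_ordMod hk r), h, mul_comm k, mul_assoc,
      Nat.mul_div_cancel' hk, mul_comm]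
  have hcop' : (m / k).Coprime m :=
    hratio ▸ hcop.coprime_dvd_left (Nat.div_dvd_of_dvd (ordMod_dvd_ordMod hk r))
  rw [← Nat.div_mul_cancel hk, Nat.Coprime.eq_one_of_dvd hcop' (Nat.div_dvd_of_dvd hk), one_mul]

end ordMod

open Subgroup

theorem Subgroup.card_eq_card_map_mul_card_ker_inf {G G' : Type*} [Group G] [Group G']
    (f : G →* G') (K : Subgroup G) :
    Nat.card K = Nat.card (K.map f) * Nat.card (f.ker ⊓ K : Subgroup G) := by
  rw [← relIndex_ker, relIndex, mul_comm, ← inf_subgroupOf_right, ← card_mul_index,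
    ← Nat.card_congr (subgroupOfEquivOfLe (inf_le_right : f.ker ⊓ K ≤ K)).toEquiv]

section Metacyclic

variable {G : Type*} [Group G] {a b : G} {r : ℕ}

theorem pow_mul_pow_eq_pow_mul_pow (hrel : b⁻¹ * a * b = a ^ r) (i j : ℕ) :
    a ^ i * b ^ j = b ^ j * a ^ (i * r ^ j) := by
  have hb : ∀ i : ℕ, a ^ i * b = b * a ^ (i * r) := fun i => by
    have : SemiconjBy b (a ^ r) a := by rw [SemiconjBy, ← hrel]; group
    rw [mul_comm i, pow_mul]
    exact (this.pow_right i).symm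
  induction j with
  | zero => simp
  | succ j ih =>
    calc a ^ i * b ^ (j + 1) = b ^ j * (a ^ (i * r ^ j) * b) := by
          rw [pow_succ, ← mul_assoc, ih, mul_assoc]
      _ = b ^ (j + 1) * a ^ (i * r ^ (j + 1)) := by
          rw [hb, ← mul_assoc, ← pow_succ, pow_succ r, mul_assoc]

theorem exists_eq_pow_mul_pow [Finite G] (hrel : b⁻¹ * a * b = a ^ r)
    (hgen : closure {a, b} = ⊤) (x : G) : ∃ j i : ℕ, x = b ^ j * a ^ i := by
  have hx : x ∈ Submonoid.closure {a, b} := by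
    rw [← closure_toSubmonoid_of_finite, hgen]; trivial
  induction hx using Submonoid.closure_induction with
  | mem x hx =>
    rcases hx with rfl | rfl
    · exact ⟨0, 1, by simp⟩
    · exact ⟨1, 0, by simp⟩
  | one => exact ⟨0, 0, by simp⟩
  | mul x y _ _ hx hy =>
    obtain ⟨j, i, rfl⟩ := hx
    obtain ⟨l, k, rfl⟩ := hy
    refine ⟨j + l, i * r ^ l + k, ?_⟩
    rw [mul_assoc, ← mul_assoc (a ^ i), pow_mul_pow_eq_pow_mul_pow hrel, pow_add, pow_add]
    group

theorem commute_pow_pow_iff (hrel : b⁻¹ * a * b = a ^ r) (k j : ℕ) :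
    Commute (a ^ k) (b ^ j) ↔ ordMod (orderOf (a ^ k)) r ∣ j := by
  rw [ordMod, orderOf_dvd_iff_pow_eq_one, ← Nat.cast_pow, ← Nat.cast_one,
    ZMod.natCast_eq_natCast_iff, ← pow_eq_pow_iff_modEq, pow_one, ← pow_mul, commute_iff_eq,
    pow_mul_pow_eq_pow_mul_pow hrel, mul_right_inj, eq_comm]

theorem commute_pow_mul_pow_iff (hrel : b⁻¹ * a * b = a ^ r) (k j i : ℕ) :
    Commute (a ^ k) (b ^ j * a ^ i) ↔ ordMod (orderOf (a ^ k)) r ∣ j := by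
  rw [← commute_pow_pow_iff hrel]
  exact ⟨fun h => by simpa using h.mul_right (Commute.pow_pow_self a k i).inv_right,
    fun h => h.mul_right (Commute.pow_pow_self a k i)⟩

theorem zpowers_normal [Finite G] (hrel : b⁻¹ * a * b = a ^ r) (hgen : closure {a, b} = ⊤) :
    (zpowers a).Normal where
  conj_mem x hx g := by
    obtain ⟨k, rfl⟩ := mem_powers_iff_mem_zpowers.mpr hx
    obtain ⟨j, i, hg⟩ := exists_eq_pow_mul_pow hrel hgen g⁻¹
    have hconj : (b ^ j)⁻¹ * a ^ k * b ^ j = a ^ (k * r ^ j) := by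
      rw [mul_assoc, pow_mul_pow_eq_pow_mul_pow hrel, inv_mul_cancel_left]
    rw [← inv_inv g, hg, inv_inv, show (b ^ j * a ^ i)⁻¹ * a ^ k * (b ^ j * a ^ i) =
      (a ^ i)⁻¹ * ((b ^ j)⁻¹ * a ^ k * b ^ j) * a ^ i by group, hconj]
    exact mul_mem (mul_mem (inv_mem (pow_mem (mem_zpowers a) i)) (pow_mem (mem_zpowers a) _))
      (pow_mem (mem_zpowers a) i)

variable {Q : Type*} [Group Q] {f : G →* Q}

theorem exists_pow_mem_orderOf_eq_card [Finite G] {D : Subgroup G} (hD : D ≤ zpowers a) :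
    ∃ k : ℕ, a ^ k ∈ D ∧ orderOf (a ^ k) = Nat.card D := by
  have := isCyclic_of_le hD
  obtain ⟨g, hg⟩ := IsCyclic.exists_ofOrder_eq_natCard (α := D)
  obtain ⟨k, hk : a ^ k = g⟩ := mem_powers_iff_mem_zpowers.mpr (hD g.2)
  exact ⟨k, hk ▸ g.2, by rw [hk, orderOf_coe, hg]⟩

theorem ordMod_dvd_orderOf_map (hrel : b⁻¹ * a * b = a ^ r) (hf : f.ker = zpowers a) (k : ℕ) :
    ordMod (orderOf (a ^ k)) r ∣ orderOf (f b) := by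
  have hmem : b ^ orderOf (f b) ∈ zpowers a := by
    rw [← hf, MonoidHom.mem_ker, map_pow, pow_orderOf_eq_one]
  obtain ⟨z, hz⟩ := hmem
  rw [← commute_pow_pow_iff hrel, ← hz]
  exact ((Commute.refl a).pow_left k).zpow_right z

theorem ordMod_orderOf_dvd_orderOf_map (hrel : b⁻¹ * a * b = a ^ r) (hf : f.ker = zpowers a) :
    ordMod (orderOf a) r ∣ orderOf (f b) := by
  simpa using ordMod_dvd_orderOf_map hrel hf 1

theorem map_le_zpowers_of_commute [Finite G] (hrel : b⁻¹ * a * b = a ^ r)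
    (hgen : closure {a, b} = ⊤) (hf : f.ker = zpowers a) {S : Subgroup G} {k : ℕ}
    (hS : ∀ x ∈ S, Commute (a ^ k) x) :
    S.map f ≤ zpowers (f b ^ ordMod (orderOf (a ^ k)) r) := by
  rintro _ ⟨x, hx, rfl⟩
  obtain ⟨j, i, rfl⟩ := exists_eq_pow_mul_pow hrel hgen x
  obtain ⟨q, rfl⟩ := (commute_pow_mul_pow_iff hrel k j i).mp (hS _ hx)
  have hfa : f a = 1 := by rw [← MonoidHom.mem_ker, hf]; exact mem_zpowers a
  rw [map_mul, map_pow, map_pow, hfa, one_pow, mul_one, pow_mul]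
  exact pow_mem (mem_zpowers _) q

theorem card_map_mul_ordMod_le [Finite G] [Finite Q] (hrel : b⁻¹ * a * b = a ^ r)
    (hgen : closure {a, b} = ⊤) (hf : f.ker = zpowers a) {S T : Subgroup G}
    (hST : ∀ x ∈ S, ∀ y ∈ T, Commute y x) :
    Nat.card (S.map f) * ordMod (Nat.card (zpowers a ⊓ T : Subgroup G)) r ≤ orderOf (f b) := by
  obtain ⟨k, hkT, hk⟩ :=
    exists_pow_mem_orderOf_eq_card (inf_le_left : zpowers a ⊓ T ≤ zpowers a)
  have hc := ordMod_dvd_orderOf_map hrel hf k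
  have hN : 0 < orderOf (f b) := Nat.pos_of_dvd_of_pos (orderOf_map_dvd f b) (orderOf_pos b)
  have hle := card_le_of_le (map_le_zpowers_of_commute hrel hgen hf fun x hx => hST x hx _ hkT.2)
  rw [Nat.card_zpowers, orderOf_pow_of_dvd (Nat.pos_of_dvd_of_pos hc hN).ne' hc] at hle
  rw [← hk]
  exact (Nat.mul_le_mul_right _ hle).trans (Nat.div_mul_cancel hc).le

theorem map_closure_pow_ordMod (hf : f.ker = zpowers a) :
    (closure {a, b ^ ordMod (orderOf a) r}).map f = zpowers (f b ^ ordMod (orderOf a) r) := by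
  have hfa : f a = 1 := by rw [← MonoidHom.mem_ker, hf]; exact mem_zpowers a
  rw [MonoidHom.map_closure, Set.image_pair, hfa, map_pow, closure_insert_one, zpowers_eq_closure]

end Metacyclic

theorem Nat.eq_of_mul_eq_mul_of_le {a₁ a₂ a₃ a₄ b₁ b₂ b₃ b₄ : ℕ} (h₁ : a₁ ≤ b₁) (h₂ : a₂ ≤ b₂)
    (h₃ : a₃ ≤ b₃) (h₄ : a₄ ≤ b₄) (ha : 0 < a₁ * a₂ * (a₃ * a₄))
    (h : a₁ * a₂ * (a₃ * a₄) = b₁ * b₂ * (b₃ * b₄)) :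
    a₁ = b₁ ∧ a₂ = b₂ ∧ a₃ = b₃ ∧ a₄ = b₄ := by
  simp only [CanonicallyOrderedAdd.mul_pos] at ha
  obtain ⟨⟨ha₁, ha₂⟩, ha₃, ha₄⟩ := ha
  have hb₂ := ha₂.trans_le h₂
  have hb₄ := ha₄.trans_le h₄
  obtain ⟨h₁₂, h₃₄⟩ := (mul_eq_mul_iff_eq_and_eq_of_pos (Nat.mul_le_mul h₁ h₂)
    (Nat.mul_le_mul h₃ h₄) (by positivity) (by have := ha₃.trans_le h₃; positivity)).mp h
  obtain ⟨e₁, e₂⟩ := (mul_eq_mul_iff_eq_and_eq_of_pos h₁ h₂ ha₁ hb₂).mp h₁₂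
  exact ⟨e₁, e₂, (mul_eq_mul_iff_eq_and_eq_of_pos h₃ h₄ ha₃ hb₄).mp h₃₄⟩

theorem chermakDelgadoMeasure_eq_card_map_mul {G Q : Type*} [Group G] [Group Q] (f : G →* Q)
    (K : Subgroup G) :
    chermakDelgadoMeasure K = Nat.card (K.map f) * Nat.card (f.ker ⊓ K : Subgroup G) *
      (Nat.card ((centralizer (K : Set G)).map f) *
        Nat.card (f.ker ⊓ centralizer (K : Set G) : Subgroup G)) := by
  rw [chermakDelgadoMeasure, card_eq_card_map_mul_card_ker_inf f K,
    card_eq_card_map_mul_card_ker_inf f (centralizer (K : Set G))]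

theorem chermakDelgadoMeasure_pos {G : Type*} [Group G] [Finite G] (K : Subgroup G) :
    0 < chermakDelgadoMeasure K :=
  Nat.mul_pos Nat.card_pos Nat.card_pos

section ChermakDelgado

variable {G : Type*} [Group G] [Finite G] {a b : G} {r : ℕ} {Q : Type*} [Group Q] {f : G →* Q}

theorem chermakDelgadoMeasure_mul_sq_le [Finite Q] (hrel : b⁻¹ * a * b = a ^ r)
    (hgen : closure {a, b} = ⊤) (hf : f.ker = zpowers a) (hr : IsUnit (r : ZMod (orderOf a)))
    (hcop : (ordMod (orderOf a) r).Coprime (orderOf a)) (K : Subgroup G) :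
    chermakDelgadoMeasure K * ordMod (orderOf a) r ^ 2 ≤ (orderOf a * orderOf (f b)) ^ 2 ∧
      (chermakDelgadoMeasure K * ordMod (orderOf a) r ^ 2 = (orderOf a * orderOf (f b)) ^ 2 →
        zpowers a ≤ K ∧ zpowers a ≤ centralizer K ∧
          Nat.card (K.map f) * ordMod (orderOf a) r = orderOf (f b)) := by
  have : NeZero (orderOf a) := ⟨(orderOf_pos a).ne'⟩
  set C := centralizer (K : Set G)
  set m := orderOf a
  set d := ordMod m r
  set u := Nat.card (zpowers a ⊓ K : Subgroup G)
  set v := Nat.card (zpowers a ⊓ C : Subgroup G)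
  have hA : Nat.card (zpowers a) = m := Nat.card_zpowers a
  have hu : u ∣ m := hA ▸ card_dvd_of_le inf_le_left
  have hv : v ∣ m := hA ▸ card_dvd_of_le inf_le_left
  have h₁ : Nat.card (K.map f) * ordMod v r ≤ orderOf (f b) :=
    card_map_mul_ordMod_le hrel hgen hf fun x hx _ hy => (mem_centralizer_iff.mp hy x hx).symm
  have h₂ : Nat.card (C.map f) * ordMod u r ≤ orderOf (f b) :=
    card_map_mul_ordMod_le hrel hgen hf fun _ hx y hy => mem_centralizer_iff.mp hx y hy
  have h₃ : u * d ≤ m * ordMod u r := mul_ordMod_le_mul_ordMod hu hr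
  have h₄ : v * d ≤ m * ordMod v r := mul_ordMod_le_mul_ordMod hv hr
  have ht : 0 < ordMod u r * ordMod v r :=
    Nat.mul_pos (Nat.pos_of_dvd_of_pos (ordMod_dvd_ordMod hu r) (ordMod_pos hr))
      (Nat.pos_of_dvd_of_pos (ordMod_dvd_ordMod hv r) (ordMod_pos hr))
  -- scaled by `ordMod u r * ordMod v r`, the measure is the product of the left sides of `h₁`–`h₄`
  have hmeas : chermakDelgadoMeasure K * d ^ 2 * (ordMod u r * ordMod v r) =
      Nat.card (K.map f) * ordMod v r * (Nat.card (C.map f) * ordMod u r) *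
        (u * d * (v * d)) := by
    rw [chermakDelgadoMeasure_eq_card_map_mul f, hf]
    ring
  have hbound : (m * orderOf (f b)) ^ 2 * (ordMod u r * ordMod v r) =
      orderOf (f b) * orderOf (f b) * (m * ordMod u r * (m * ordMod v r)) := by ring
  refine ⟨Nat.le_of_mul_le_mul_right (hmeas ▸ hbound ▸ Nat.mul_le_mul (Nat.mul_le_mul h₁ h₂)
    (Nat.mul_le_mul h₃ h₄)) ht, fun heq => ?_⟩
  have hpos : 0 < chermakDelgadoMeasure K * d ^ 2 * (ordMod u r * ordMod v r) :=
    Nat.mul_pos (Nat.mul_pos (chermakDelgadoMeasure_pos K) (pow_pos (ordMod_pos hr) 2)) ht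
  obtain ⟨h₁', -, h₃', h₄'⟩ := Nat.eq_of_mul_eq_mul_of_le h₁ h₂ h₃ h₄ (hmeas ▸ hpos)
    (by rw [← hmeas, heq, hbound])
  have hvm := eq_of_mul_ordMod_eq_mul_ordMod hv hr hcop h₄'
  have hle : ∀ T : Subgroup G, Nat.card (zpowers a ⊓ T : Subgroup G) = m → zpowers a ≤ T :=
    fun T hT => inf_eq_left.mp (eq_of_le_of_card_ge inf_le_left (hT.trans hA.symm).ge)
  exact ⟨hle K (eq_of_mul_ordMod_eq_mul_ordMod hu hr hcop h₃'), hle C hvm, by rwa [hvm] at h₁'⟩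

theorem centralizer_closure_pow_ordMod (hrel : b⁻¹ * a * b = a ^ r)
    (hgen : closure {a, b} = ⊤) :
    centralizer (closure {a, b ^ ordMod (orderOf a) r} : Set G) =
      closure {a, b ^ ordMod (orderOf a) r} := by
  set d := ordMod (orderOf a) r
  have ha : a ∈ closure {a, b ^ d} := subset_closure (Set.mem_insert _ _)
  have hbd : b ^ d ∈ closure {a, b ^ d} := subset_closure (Set.mem_insert_of_mem _ rfl)
  have hab : Commute a (b ^ d) := by simpa using (commute_pow_pow_iff hrel 1 d).mpr (by simp [d])
  apply le_antisymm
  · intro x hx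
    obtain ⟨j, i, rfl⟩ := exists_eq_pow_mul_pow hrel hgen x
    have hcomm : Commute (a ^ 1) (b ^ j * a ^ i) := by
      rw [pow_one]; exact mem_centralizer_iff.mp hx a ha
    obtain ⟨q, rfl⟩ : d ∣ j := by simpa using (commute_pow_mul_pow_iff hrel 1 j i).mp hcomm
    exact mul_mem (pow_mul b d q ▸ pow_mem hbd q) (pow_mem ha i)
  · rw [centralizer_closure, closure_le, Set.insert_subset_iff, Set.singleton_subset_iff]
    refine ⟨?_, ?_⟩ <;> rw [SetLike.mem_coe, mem_centralizer_iff] <;> rintro y (rfl | rfl) <;>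
      first | rfl | exact hab.eq | exact hab.eq.symm

theorem chermakDelgadoMeasure_closure_pow_ordMod (hrel : b⁻¹ * a * b = a ^ r)
    (hgen : closure {a, b} = ⊤) (hf : f.ker = zpowers a) (hr : IsUnit (r : ZMod (orderOf a))) :
    chermakDelgadoMeasure (closure {a, b ^ ordMod (orderOf a) r}) * ordMod (orderOf a) r ^ 2 =
      (orderOf a * orderOf (f b)) ^ 2 := by
  have hd := ordMod_orderOf_dvd_orderOf_map hrel hf
  have hd0 := ordMod_pos hr
  rw [chermakDelgadoMeasure, centralizer_closure_pow_ordMod hrel hgen,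
    card_eq_card_map_mul_card_ker_inf f, map_closure_pow_ordMod hf, hf,
    inf_eq_left.mpr (zpowers_le.mpr (subset_closure (Set.mem_insert _ _))), Nat.card_zpowers,
    Nat.card_zpowers, orderOf_pow_of_dvd hd0.ne' hd, ← Nat.div_mul_cancel hd,
    Nat.mul_div_cancel _ hd0]
  ring

theorem eq_closure_pow_ordMod [Finite Q] (hrel : b⁻¹ * a * b = a ^ r)
    (hgen : closure {a, b} = ⊤) (hf : f.ker = zpowers a) (hr : IsUnit (r : ZMod (orderOf a)))
    {K : Subgroup G} (hA : zpowers a ≤ K) (hAC : zpowers a ≤ centralizer K)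
    (hcard : Nat.card (K.map f) * ordMod (orderOf a) r = orderOf (f b)) :
    K = closure {a, b ^ ordMod (orderOf a) r} := by
  have hd := ordMod_orderOf_dvd_orderOf_map hrel hf
  have hd0 := ordMod_pos hr
  refine map_injective_of_ker_le f (hf ▸ hA)
    (hf ▸ zpowers_le.mpr (subset_closure (Set.mem_insert _ _))) ?_
  rw [map_closure_pow_ordMod hf]
  have hle : K.map f ≤ zpowers (f b ^ ordMod (orderOf a) r) := by
    simpa using map_le_zpowers_of_commute hrel hgen hf (k := 1) fun x hx => by
      rw [pow_one]; exact (mem_centralizer_iff.mp (hAC (mem_zpowers a)) x hx).symm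
  refine eq_of_le_of_card_ge hle ?_
  rw [Nat.card_zpowers, orderOf_pow_of_dvd hd0.ne' hd, ← hcard, Nat.mul_div_cancel _ hd0]

end ChermakDelgado

theorem setOf_forall_le_eq_singleton {α β : Type*} [PartialOrder β] {μ : α → β} {x : α}
    (hle : ∀ y, μ y ≤ μ x) (heq : ∀ y, μ y = μ x → y = x) : {z | ∀ y, μ y ≤ μ z} = {x} :=
  Set.eq_singleton_iff_unique_mem.mpr ⟨hle, fun z hz => heq z (le_antisymm (hle z) (hz x))⟩

theorem stmt_11_general {G : Type*} [Group G] [Finite G]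
    (m n r : ℕ)
    (hgcd1 : Nat.gcd m n = 1)
    (hrn : r ^ n % m = 1 % m)
    (a b : G) (ha : orderOf a = m) (hb : orderOf b = n)
    (hrel : b⁻¹ * a * b = a ^ r)
    (hgen : Subgroup.closure {a, b} = ⊤) :
    {H : Subgroup G | ∀ K : Subgroup G, chermakDelgadoMeasure K ≤ chermakDelgadoMeasure H} =
      {Subgroup.closure {a, b ^ ordMod m r}} := by
  subst ha hb
  have hrb : (r : ZMod (orderOf a)) ^ orderOf b = 1 := by
    rw [← Nat.cast_pow, ← Nat.cast_one, ZMod.natCast_eq_natCast_iff]; exact hrn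
  have hr : IsUnit (r : ZMod (orderOf a)) := IsUnit.of_pow_eq_one hrb (orderOf_pos b).ne'
  have hcop : (ordMod (orderOf a) r).Coprime (orderOf a) :=
    (Nat.Coprime.symm hgcd1).coprime_dvd_left (orderOf_dvd_of_pow_eq_one hrb)
  have := zpowers_normal hrel hgen
  have hf : (QuotientGroup.mk' (zpowers a)).ker = zpowers a := QuotientGroup.ker_mk' _
  have hbound := chermakDelgadoMeasure_mul_sq_le hrel hgen hf hr hcop
  have hH := chermakDelgadoMeasure_closure_pow_ordMod hrel hgen hf hr
  have hd0 : 0 < ordMod (orderOf a) r ^ 2 := pow_pos (ordMod_pos hr) 2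
  refine setOf_forall_le_eq_singleton (fun K => ?_) (fun K hK => ?_)
  · exact Nat.le_of_mul_le_mul_right ((hbound K).1.trans hH.ge) hd0
  · obtain ⟨hA, hAC, hcard⟩ := (hbound K).2 (by rw [hK, hH])
    exact eq_closure_pow_ordMod hrel hgen hf hr hA hAC hcard

/-- The Chermak–Delgado lattice of `ZM(m,n,r)` is `{⟨a, b^d⟩}`, `d = ord_m(r)`. -/
theorem stmt_11 {G : Type*} [Group G] [Finite G]
    (m n r : ℕ) (hm : 0 < m) (hn : 0 < n)
    (hgcd1 : Nat.gcd m n = 1) (hgcd2 : Nat.gcd m (r - 1) = 1)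
    (hrn : r ^ n % m = 1 % m)
    (a b : G) (ha : orderOf a = m) (hb : orderOf b = n)
    (hrel : b⁻¹ * a * b = a ^ r)
    (hgen : Subgroup.closure {a, b} = ⊤)
    (hcard : Nat.card G = m * n) :
    {H : Subgroup G | ∀ K : Subgroup G, chermakDelgadoMeasure K ≤ chermakDelgadoMeasure H} =
      {Subgroup.closure {a, b ^ ordMod m r}} :=
  stmt_11_general m n r hgcd1 hrn a b ha hb hrel hgen
end

section
/- For k ≥ 3, the Chermak-Delgado lattice of the dihedral group D_{2^{k+1}} consists only of the cyclic subgroup ⟨a⟩ of order 2^k. -/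
open DihedralGroup Subgroup

theorem ZMod.ncard_two_mul_eq_zero_le (n : ℕ) [NeZero n] :
    {i : ZMod n | 2 * i = 0}.ncard ≤ 2 := by
  classical
  rw [Set.ncard_eq_toFinset_card']
  convert IsAddCyclic.card_nsmul_eq_zero_le (α := ZMod n) two_pos using 2
  ext
  simp [two_mul]

theorem Subgroup.card_le_ncard_of_subset {G : Type*} [Group G] {H : Subgroup G} {s : Set G}
    (h : (H : Set G) ⊆ s) (hs : s.Finite := by toFinite_tac) : Nat.card H ≤ s.ncard :=
  Nat.card_coe_set_eq (H : Set G) ▸ Set.ncard_le_ncard h hs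

namespace DihedralGroup

variable {n : ℕ}

theorem commute_r_sr_iff {i j : ZMod n} : Commute (r i) (sr j) ↔ 2 * i = 0 := by
  rw [Commute, SemiconjBy, r_mul_sr, sr_mul_r, sr.injEq]
  constructor <;> intro h <;> linear_combination (-1 : ZMod n) * h

theorem commute_sr_sr_iff {i j : ZMod n} : Commute (sr i) (sr j) ↔ 2 * (i - j) = 0 := by
  rw [Commute, SemiconjBy, sr_mul_sr, sr_mul_sr, r.injEq]
  constructor <;> intro h <;> linear_combination (-1 : ZMod n) * h

theorem r_mem_zpowers_r_one (i : ZMod n) : r i ∈ zpowers (r 1) :=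
  mem_zpowers_iff.mpr ⟨(i.cast : ℤ), by rw [r_one_zpow, ZMod.intCast_zmod_cast]⟩

theorem sr_notMem_zpowers_r_one (j : ZMod n) : sr j ∉ zpowers (r 1) := by
  intro hj
  obtain ⟨k, hk⟩ := mem_zpowers_iff.mp hj
  rw [r_one_zpow] at hk
  cases hk

theorem exists_sr_mem_of_not_le {K : Subgroup (DihedralGroup n)} (h : ¬K ≤ zpowers (r 1)) :
    ∃ j, sr j ∈ K := by
  obtain ⟨x | j, hxK, hxR⟩ := SetLike.not_le_iff_exists.mp h
  · exact absurd (r_mem_zpowers_r_one _) hxR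
  · exact ⟨j, hxK⟩

theorem r_mem_centralizer_sr_iff {i j : ZMod n} : r i ∈ centralizer {sr j} ↔ 2 * i = 0 := by
  rw [mem_centralizer_singleton_iff, ← SemiconjBy, ← Commute, commute_r_sr_iff]

theorem sr_mem_centralizer_sr_iff {i j : ZMod n} :
    sr i ∈ centralizer {sr j} ↔ 2 * (i - j) = 0 := by
  rw [mem_centralizer_singleton_iff, ← SemiconjBy, ← Commute, commute_sr_sr_iff]

theorem centralizer_r_le {i : ZMod n} (hi : 2 * i ≠ 0) :
    centralizer {r i} ≤ zpowers (r 1) := by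
  rintro (j | j) hj
  · exact r_mem_zpowers_r_one j
  · exact absurd (commute_r_sr_iff.mp (mem_centralizer_singleton_iff.mp hj).symm) hi

theorem centralizer_zpowers_r_one (hn : 3 ≤ n) :
    centralizer ((zpowers (r 1) : Subgroup (DihedralGroup n)) : Set (DihedralGroup n)) =
      zpowers (r 1) := by
  have h2 : (2 : ZMod n) ≠ 0 := by
    have : ((2 : ℕ) : ZMod n) ≠ 0 := by
      rw [Ne, ZMod.natCast_eq_zero_iff]
      exact fun h => absurd (Nat.le_of_dvd two_pos h) (by omega)
    exact_mod_cast this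
  refine le_antisymm ?_ (le_centralizer _)
  exact (centralizer_le (Set.singleton_subset_iff.mpr (mem_zpowers _))).trans
    (centralizer_r_le (by rwa [mul_one]))

theorem centralizer_sr_subset (j : ZMod n) :
    (centralizer {sr j} : Set (DihedralGroup n)) ⊆
      r '' {i | 2 * i = 0} ∪ (fun t => sr (j + t)) '' {i | 2 * i = 0} := by
  rintro (i | i) hi
  · exact Or.inl ⟨i, r_mem_centralizer_sr_iff.mp hi, rfl⟩
  · exact Or.inr ⟨i - j, sr_mem_centralizer_sr_iff.mp hi, by simp⟩

theorem card_zpowers_r_one : Nat.card (zpowers (r 1 : DihedralGroup n)) = n := by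
  rw [Nat.card_zpowers, orderOf_r_one]

theorem chermakDelgadoMeasure_zpowers_r_one (hn : 3 ≤ n) :
    chermakDelgadoMeasure (zpowers (r 1 : DihedralGroup n)) = n * n := by
  rw [chermakDelgadoMeasure, centralizer_zpowers_r_one hn, card_zpowers_r_one]

theorem centralizer_le_zpowers_r_one_of_r_mem {K : Subgroup (DihedralGroup n)} {i : ZMod n}
    (hi : 2 * i ≠ 0) (hiK : r i ∈ K) : centralizer (K : Set (DihedralGroup n)) ≤ zpowers (r 1) :=
  (centralizer_le (Set.singleton_subset_iff.mpr hiK)).trans (centralizer_r_le hi)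

theorem le_centralizer_sr_of_sr_mem {K : Subgroup (DihedralGroup n)} {j : ZMod n}
    (hK : ∀ i, r i ∈ K → 2 * i = 0) (hjK : sr j ∈ K) : K ≤ centralizer {sr j} := by
  rintro (i | i) hiK
  · exact r_mem_centralizer_sr_iff.mpr (hK i hiK)
  · have h := hK _ (sr_mul_sr i j ▸ K.mul_mem hiK hjK)
    exact sr_mem_centralizer_sr_iff.mpr (by linear_combination (-1 : ZMod n) * h)

section Finite

variable [NeZero n]

theorem ncard_image_two_torsion_le {α : Type*} (f : ZMod n → α) :
    (f '' {i | 2 * i = 0}).ncard ≤ 2 :=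
  (Set.ncard_image_le (Set.toFinite _)).trans (ZMod.ncard_two_mul_eq_zero_le n)

theorem card_centralizer_sr_le (j : ZMod n) : Nat.card (centralizer {sr j}) ≤ 4 :=
  (card_le_ncard_of_subset (centralizer_sr_subset j)).trans <| (Set.ncard_union_le _ _).trans <|
    add_le_add (ncard_image_two_torsion_le _) (ncard_image_two_torsion_le _)

theorem card_le_two_of_subset_image_r {H : Subgroup (DihedralGroup n)}
    (h : (H : Set (DihedralGroup n)) ⊆ r '' {i | 2 * i = 0}) : Nat.card H ≤ 2 :=
  (card_le_ncard_of_subset h).trans (ncard_image_two_torsion_le r)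

theorem card_le_two_mul (H : Subgroup (DihedralGroup n)) : Nat.card H ≤ 2 * n :=
  nat_card (n := n) ▸ H.card_le_card_group

theorem chermakDelgadoMeasure_lt_of_lt_zpowers_r_one {K : Subgroup (DihedralGroup n)}
    {i : ZMod n} (hi : 2 * i ≠ 0) (hiK : r i ∈ K) (hK : K < zpowers (r 1)) :
    chermakDelgadoMeasure K < n * n := by
  have hC : Nat.card (centralizer (K : Set (DihedralGroup n))) ≤ n :=
    (card_le_of_le (centralizer_le_zpowers_r_one_of_r_mem hi hiK)).trans_eq card_zpowers_r_one
  have hKn : Nat.card K < n := by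
    refine lt_of_not_ge fun h => hK.ne (eq_of_le_of_card_ge hK.le ?_)
    rwa [card_zpowers_r_one]
  calc chermakDelgadoMeasure K ≤ Nat.card K * n := Nat.mul_le_mul_left _ hC
    _ < n * n := Nat.mul_lt_mul_of_pos_right hKn (NeZero.pos n)

theorem chermakDelgadoMeasure_le_of_r_mem_of_sr_mem {K : Subgroup (DihedralGroup n)}
    {i j : ZMod n} (hi : 2 * i ≠ 0) (hiK : r i ∈ K) (hjK : sr j ∈ K) :
    chermakDelgadoMeasure K ≤ 2 * n * 2 := by
  refine Nat.mul_le_mul (card_le_two_mul K) (card_le_two_of_subset_image_r fun x hx => ?_)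
  rcases x with m | m
  · exact ⟨m, r_mem_centralizer_sr_iff.mp
      (centralizer_le (Set.singleton_subset_iff.mpr hjK) hx), rfl⟩
  · exact absurd (centralizer_le_zpowers_r_one_of_r_mem hi hiK hx) (sr_notMem_zpowers_r_one m)

theorem chermakDelgadoMeasure_le_of_le_zpowers_r_one {K : Subgroup (DihedralGroup n)}
    (hK : ∀ i, r i ∈ K → 2 * i = 0) (hKR : K ≤ zpowers (r 1)) :
    chermakDelgadoMeasure K ≤ 2 * (2 * n) := by
  refine Nat.mul_le_mul (card_le_two_of_subset_image_r fun x hx => ?_) (card_le_two_mul _)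
  rcases x with m | m
  · exact ⟨m, hK m hx, rfl⟩
  · exact absurd (hKR hx) (sr_notMem_zpowers_r_one m)

theorem chermakDelgadoMeasure_le_of_sr_mem {K : Subgroup (DihedralGroup n)} {j : ZMod n}
    (hK : ∀ i, r i ∈ K → 2 * i = 0) (hjK : sr j ∈ K) : chermakDelgadoMeasure K ≤ 4 * 4 :=
  Nat.mul_le_mul ((card_le_of_le (le_centralizer_sr_of_sr_mem hK hjK)).trans
      (card_centralizer_sr_le j))
    ((card_le_of_le (centralizer_le (Set.singleton_subset_iff.mpr hjK))).trans
      (card_centralizer_sr_le j))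

end Finite

theorem chermakDelgadoMeasure_lt_of_ne_zpowers_r_one (hn : 5 ≤ n)
    {K : Subgroup (DihedralGroup n)} (hK : K ≠ zpowers (r 1)) :
    chermakDelgadoMeasure K < n * n := by
  have : NeZero n := ⟨by omega⟩
  by_cases hrot : ∀ i, r i ∈ K → 2 * i = 0
  · by_cases hKR : K ≤ zpowers (r 1)
    · have := chermakDelgadoMeasure_le_of_le_zpowers_r_one hrot hKR
      nlinarith
    · obtain ⟨j, hjK⟩ := exists_sr_mem_of_not_le hKR
      have := chermakDelgadoMeasure_le_of_sr_mem hrot hjK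
      nlinarith
  · push Not at hrot
    obtain ⟨i, hiK, hi⟩ := hrot
    by_cases hKR : K ≤ zpowers (r 1)
    · exact chermakDelgadoMeasure_lt_of_lt_zpowers_r_one hi hiK (lt_of_le_of_ne hKR hK)
    · obtain ⟨j, hjK⟩ := exists_sr_mem_of_not_le hKR
      have := chermakDelgadoMeasure_le_of_r_mem_of_sr_mem hi hiK hjK
      nlinarith

end DihedralGroup

/-- For `k ≥ 3`, `CD(D_{2^{k+1}}) = {⟨a⟩}`, the cyclic subgroup of order `2^k`. -/
theorem stmt_15 (k : ℕ) (hk : 3 ≤ k) :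
    {H : Subgroup (DihedralGroup (2 ^ k)) |
        ∀ K : Subgroup (DihedralGroup (2 ^ k)),
          chermakDelgadoMeasure K ≤ chermakDelgadoMeasure H} =
      {Subgroup.zpowers (DihedralGroup.r 1)} ∧
    Nat.card (Subgroup.zpowers (DihedralGroup.r (1 : ZMod (2 ^ k)))) = 2 ^ k := by
  have hn : 8 ≤ 2 ^ k := Nat.pow_le_pow_right two_pos hk
  have hR := chermakDelgadoMeasure_zpowers_r_one (n := 2 ^ k) (by omega)
  refine ⟨Set.eq_singleton_iff_unique_mem.mpr ⟨fun K => ?_, fun H hH => ?_⟩, card_zpowers_r_one⟩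
  · rw [hR]
    by_cases hK : K = zpowers (r 1)
    · rw [hK, hR]
    · exact (chermakDelgadoMeasure_lt_of_ne_zpowers_r_one (by omega) hK).le
  · by_contra hH'
    have := hH (zpowers (r 1))
    rw [hR] at this
    exact this.not_gt (chermakDelgadoMeasure_lt_of_ne_zpowers_r_one (by omega) hH')
end
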